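/- arXiv:1502.05521 — 2 statements merged into one kernel-verified Lean document; each statement's English description precedes it below -/
import Mathlib

section
/- (Tachyon confinement.) Let z(t) = (x(t), y(t)) be a geodesic of the Kaluza–Klein metric g̃ (with Ω ≡ 1, base metric g₀) satisfying g̃_{AB}(z) ż^A ż^B = −1 for all t, let r := −β a(x(t))² (ẏ + β A_μ(x) ẋ^μ) be its conserved charge, and suppose the projected curve x is timelike for g₀, i.e. g₀_{μν}(x(t)) ẋ^μ ẋ^ν > 0 for all t. Then a(x(t))² < r²/β² for all t; that is, the projected motion is confined to the region where a < |r|/|β|. -/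
open scoped BigOperators

/-- Partial derivative in the μ-th coordinate direction. -/
noncomputable def pd {ι : Type*} [Fintype ι] [DecidableEq ι] {F : Type*}
    [NormedAddCommGroup F] [NormedSpace ℝ F]
    (f : (ι → ℝ) → F) (μ : ι) (x : ι → ℝ) : F :=
  fderiv ℝ f x (Pi.single μ 1)

/-- Christoffel symbols Γ[h]^l_{μν} of a matrix field `h`. -/
noncomputable def Chr {ι : Type*} [Fintype ι] [DecidableEq ι]
    (h : (ι → ℝ) → Matrix ι ι ℝ) (l μ ν : ι) (x : ι → ℝ) : ℝ :=
  (1/2) * ∑ ρ : ι, (h x)⁻¹ l ρ *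
    (pd (fun z => h z ρ ν) μ x + pd (fun z => h z ρ μ) ν x - pd (fun z => h z μ ν) ρ x)

/-- A curve `z` is a geodesic of the metric `h` on the parameter set `I`. -/
def IsGeodesicOn {ι : Type*} [Fintype ι] [DecidableEq ι]
    (h : (ι → ℝ) → Matrix ι ι ℝ) (z : ℝ → ι → ℝ) (I : Set ℝ) : Prop :=
  ∀ t ∈ I, ∀ A : ι,
    deriv (fun s => deriv (fun u => z u A) s) t
      + ∑ B : ι, ∑ C : ι, Chr h A B C (z t)
          * deriv (fun u => z u B) t * deriv (fun u => z u C) t = 0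

/-- Index type of ℝ⁵ = ℝ⁴ × ℝ : the four spacetime directions plus the fibre direction `y`. -/
abbrev K5 := Sum (Fin 4) Unit

/-- Projection ℝ⁵ → ℝ⁴. -/
def projx (p : K5 → ℝ) : Fin 4 → ℝ := fun μ => p (Sum.inl μ)

/-- The Kaluza–Klein metric matrix built from `g`, `A`, `a`, conformal factor `Ω` and `β`:
`g̃_{μν} = Ω⁻²g_{μν} − a²β²A_μA_ν`, `g̃_{μy} = −a²βA_μ`, `g̃_{yy} = −a²`. -/
noncomputable def KK (g : (Fin 4 → ℝ) → Matrix (Fin 4) (Fin 4) ℝ)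
    (A : (Fin 4 → ℝ) → Fin 4 → ℝ) (a Ω : (Fin 4 → ℝ) → ℝ) (β : ℝ)
    (x : Fin 4 → ℝ) : Matrix K5 K5 ℝ :=
  Matrix.of fun i j =>
    match i, j with
    | Sum.inl μ, Sum.inl ν => ((Ω x)^2)⁻¹ * g x μ ν - (a x)^2 * β^2 * A x μ * A x ν
    | Sum.inl μ, Sum.inr _ => -((a x)^2) * β * A x μ
    | Sum.inr _, Sum.inl ν => -((a x)^2) * β * A x ν
    | Sum.inr _, Sum.inr _ => -((a x)^2)

/-- The Kaluza–Klein metric as a (y-independent) field on ℝ⁵. -/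
noncomputable def KKfield (g : (Fin 4 → ℝ) → Matrix (Fin 4) (Fin 4) ℝ)
    (A : (Fin 4 → ℝ) → Fin 4 → ℝ) (a Ω : (Fin 4 → ℝ) → ℝ) (β : ℝ) :
    (K5 → ℝ) → Matrix K5 K5 ℝ :=
  fun p => KK g A a Ω β (projx p)

/-- The quantity Q(t) = a(x(t))² (ẏ(t) + β A_μ(x(t)) ẋ^μ(t)) along a curve in ℝ⁵. -/
noncomputable def Qcharge (a : (Fin 4 → ℝ) → ℝ) (A : (Fin 4 → ℝ) → Fin 4 → ℝ)
    (β : ℝ) (z : ℝ → K5 → ℝ) (t : ℝ) : ℝ :=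
  (a (projx (z t)))^2 * (deriv (fun u => z u (Sum.inr ())) t
    + β * ∑ μ : Fin 4, A (projx (z t)) μ * deriv (fun u => z u (Sum.inl μ)) t)

/-- Electromagnetic field tensor F_{μν} = ∂_μ A_ν − ∂_ν A_μ. -/
noncomputable def Fem (A : (Fin 4 → ℝ) → Fin 4 → ℝ) (μ ν : Fin 4) (x : Fin 4 → ℝ) : ℝ :=
  pd (fun z => A z ν) μ x - pd (fun z => A z μ) ν x

/-- tachyon confinement: if z is a geodesic of the Kaluza–Klein metric
(Ω ≡ 1) with g̃(ż,ż) = −1, with conserved charge r, and its projection is g₀-timelike,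
then a(x(t))² < r²/β², i.e. the motion is confined to the region a < |r|/|β|. -/
theorem kk_tachyon_confinement
    (g₀ : (Fin 4 → ℝ) → Matrix (Fin 4) (Fin 4) ℝ)
    (A : (Fin 4 → ℝ) → Fin 4 → ℝ) (a : (Fin 4 → ℝ) → ℝ) (β : ℝ)
    (hg : ∀ μ ν, ContDiff ℝ (⊤ : ℕ∞) (fun x => g₀ x μ ν))
    (hgsymm : ∀ x, (g₀ x).IsSymm)
    (hginv : ∀ x, IsUnit (g₀ x).det)
    (hA : ∀ μ, ContDiff ℝ (⊤ : ℕ∞) (fun x => A x μ))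
    (ha : ContDiff ℝ (⊤ : ℕ∞) a) (hapos : ∀ x, 0 < a x)
    (hβ : β ≠ 0)
    (I : Set ℝ) (hI : IsOpen I) (hIconn : I.OrdConnected)
    (z : ℝ → K5 → ℝ)
    (hz : ∀ B : K5, ContDiffOn ℝ (⊤ : ℕ∞) (fun t => z t B) I)
    (hgeo : IsGeodesicOn (KKfield g₀ A a (fun _ => 1) β) z I)
    -- normalization g̃(ż, ż) = −1 for all t
    (hnorm : ∀ t ∈ I, ∑ B : K5, ∑ C : K5,
      KKfield g₀ A a (fun _ => 1) β (z t) B C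
        * deriv (fun u => z u B) t * deriv (fun u => z u C) t = -1)
    -- r is the conserved charge r = −β a² (ẏ + β A_μ ẋ^μ)
    (r : ℝ) (hr : ∀ t ∈ I, r = -β * Qcharge a A β z t)
    -- the projected curve is timelike for g₀
    (htl : ∀ t ∈ I, 0 < ∑ μ : Fin 4, ∑ ν : Fin 4, g₀ (projx (z t)) μ ν
        * deriv (fun u => z u (Sum.inl μ)) t * deriv (fun u => z u (Sum.inl ν)) t) :
    ∀ t ∈ I, (a (projx (z t)))^2 < r^2 / β^2 := by
  intro t ht
  have hn := hnorm t ht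
  have htl' := htl t ht
  have hrt := hr t ht
  have ha2 : 0 < a (projx (z t)) := hapos _
  set x := projx (z t) with hx
  set S : ℝ := ∑ μ : Fin 4, A x μ * deriv (fun u => z u (Sum.inl μ)) t with hS
  set P : ℝ := ∑ μ : Fin 4, ∑ ν : Fin 4, g₀ x μ ν * deriv (fun u => z u (Sum.inl μ)) t
      * deriv (fun u => z u (Sum.inl ν)) t with hP
  have key : (∑ B : K5, ∑ C : K5,
      KKfield g₀ A a (fun _ => 1) β (z t) B C
        * deriv (fun u => z u B) t * deriv (fun u => z u C) t)
      = P - (a x)^2 * (deriv (fun u => z u (Sum.inr ())) t + β * S)^2 := by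
    simp only [Fintype.sum_sum_type, Finset.univ_unique, Finset.sum_singleton,
      KKfield, KK, Matrix.of_apply, one_pow, inv_one, one_mul, ← hx,
      show (default : Unit) = () from rfl]
    have T1 : ∀ μ : Fin 4, (∑ ν : Fin 4,
        (g₀ x μ ν - a x ^ 2 * β ^ 2 * A x μ * A x ν) * deriv (fun u => z u (Sum.inl μ)) t *
          deriv (fun u => z u (Sum.inl ν)) t)
        = (∑ ν : Fin 4, g₀ x μ ν * deriv (fun u => z u (Sum.inl μ)) t *
            deriv (fun u => z u (Sum.inl ν)) t)
          - (A x μ * deriv (fun u => z u (Sum.inl μ)) t) * (a x ^ 2 * β ^ 2 * S) := by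
      intro μ
      rw [hS, Finset.mul_sum, Finset.mul_sum, ← Finset.sum_sub_distrib]
      exact Finset.sum_congr rfl fun ν _ => by ring
    simp only [T1]
    have F1 : (∑ μ : Fin 4, ((∑ ν : Fin 4, g₀ x μ ν * deriv (fun u => z u (Sum.inl μ)) t *
            deriv (fun u => z u (Sum.inl ν)) t)
          - (A x μ * deriv (fun u => z u (Sum.inl μ)) t) * (a x ^ 2 * β ^ 2 * S)
          + -a x ^ 2 * β * A x μ * deriv (fun u => z u (Sum.inl μ)) t *
              deriv (fun u => z u (Sum.inr ())) t))
        = P - S * (a x ^ 2 * β ^ 2 * S)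
          + S * (-a x ^ 2 * β * deriv (fun u => z u (Sum.inr ())) t) := by
      rw [hP, Finset.sum_mul, Finset.sum_mul, ← Finset.sum_sub_distrib, ← Finset.sum_add_distrib]
      apply Finset.sum_congr rfl
      intro μ _
      ring
    have F2 : (∑ μ : Fin 4, -a x ^ 2 * β * A x μ * deriv (fun u => z u (Sum.inr ())) t *
          deriv (fun u => z u (Sum.inl μ)) t)
        = S * (-a x ^ 2 * β * deriv (fun u => z u (Sum.inr ())) t) := by
      rw [hS, Finset.sum_mul]
      exact Finset.sum_congr rfl fun μ _ => by ring
    rw [F1, F2]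
    ring
  rw [key] at hn
  have hQ : Qcharge a A β z t = a x ^ 2 *
      (deriv (fun u => z u (Sum.inr ())) t + β * S) := by
    simp only [Qcharge, ← hx, ← hS]
  rw [hQ] at hrt
  have h1 : 1 < a x ^ 2 * (deriv (fun u => z u (Sum.inr ())) t + β * S) ^ 2 := by
    nlinarith [htl']
  have h2 : a x ^ 2 < (a x ^ 2 * (deriv (fun u => z u (Sum.inr ())) t + β * S)) ^ 2 := by
    nlinarith [mul_lt_mul_of_pos_left h1 (pow_pos ha2 2)]
  have hb2 : (0:ℝ) < β ^ 2 := by positivity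
  rw [hrt, lt_div_iff₀ hb2]
  nlinarith [h2, hb2]
end

section
/- Suppose g^{μν} p_μ p_ν = ε m² identically on ℝ⁴ for some constants ε, m. Then the vector field p^α satisfies p^α_{;β} p^β = q g^{αγ} F_{γβ} p^β for every α, i.e. (∂_β p^α + Γ^α_{βγ} p^γ) p^β = q g^{αγ} F_{γβ} p^β. -/
open scoped BigOperators

/-- Kinematical momentum p_μ = ∂_μ S − q A_μ. -/
noncomputable def pDown (S : (Fin 4 → ℝ) → ℝ) (A : (Fin 4 → ℝ) → Fin 4 → ℝ) (q : ℝ)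
    (μ : Fin 4) (x : Fin 4 → ℝ) : ℝ :=
  pd S μ x - q * A x μ

/-- Kinematical momentum with index raised: p^μ = g^{μν} p_ν. -/
noncomputable def pUp (g : (Fin 4 → ℝ) → Matrix (Fin 4) (Fin 4) ℝ)
    (S : (Fin 4 → ℝ) → ℝ) (A : (Fin 4 → ℝ) → Fin 4 → ℝ) (q : ℝ)
    (μ : Fin 4) (x : Fin 4 → ℝ) : ℝ :=
  ∑ ν : Fin 4, (g x)⁻¹ μ ν * pDown S A q ν x

/-!
Lowering the index with the metric, `p^α_{;β} p^β = g^{αρ} (∂_β p_ρ p^β - ½ ∂_ρ g_{βγ} p^β p^γ)`: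
the derivative of `g^{-1}` inside `∂_β p^α` cancels the `∂_β g_{ργ}` and `∂_γ g_{ρβ}` parts of the
Christoffel symbols. Differentiating the mass-shell condition `g^{μν} p_μ p_ν = ε m²` along `x^ρ`
gives `∂_ρ p_β p^β = ½ ∂_ρ g_{βγ} p^β p^γ`, so the bracket becomes `(∂_β p_ρ - ∂_ρ p_β) p^β`,
which is `q F_{ρβ} p^β` because the Hessian of `S` is symmetric.
-/

section PartialDerivative

variable {ι : Type*} [Fintype ι] [DecidableEq ι] {f h : (ι → ℝ) → ℝ} {x : ι → ℝ}

lemma pd_eq_zero_of_forall_eq {c : ℝ} (hf : ∀ z, f z = c) (μ : ι) (x : ι → ℝ) :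
    pd f μ x = 0 := by
  simp [pd, funext hf]

lemma pd_fun_mul (hf : DifferentiableAt ℝ f x) (hh : DifferentiableAt ℝ h x) (μ : ι) :
    pd (fun z => f z * h z) μ x = pd f μ x * h x + f x * pd h μ x := by
  simp only [pd, fderiv_fun_mul hf hh, add_apply, smul_apply, smul_eq_mul]
  ring

lemma pd_fun_sub (hf : DifferentiableAt ℝ f x) (hh : DifferentiableAt ℝ h x) (μ : ι) :
    pd (fun z => f z - h z) μ x = pd f μ x - pd h μ x := by
  simp [pd, fderiv_fun_sub hf hh]

lemma pd_const_mul (hf : DifferentiableAt ℝ f x) (c : ℝ) (μ : ι) :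
    pd (fun z => c * f z) μ x = c * pd f μ x := by
  simp [pd, fderiv_const_mul hf c]

lemma pd_fun_sum {κ : Type*} {s : Finset κ} {F : κ → (ι → ℝ) → ℝ}
    (hF : ∀ k ∈ s, DifferentiableAt ℝ (F k) x) (μ : ι) :
    pd (fun z => ∑ k ∈ s, F k z) μ x = ∑ k ∈ s, pd (F k) μ x := by
  simp [pd, fderiv_fun_sum hF]

lemma ContDiff.pd {n : WithTop ℕ∞} (hf : ContDiff ℝ (n + 1) f) (μ : ι) :
    ContDiff ℝ n (pd f μ) :=
  (hf.fderiv_right le_rfl).clm_apply contDiff_const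

lemma pd_comm (hf : ContDiff ℝ 2 f) (a b : ι) (x : ι → ℝ) :
    pd (pd f a) b x = pd (pd f b) a x := by
  have hdf : DifferentiableAt ℝ (fderiv ℝ f) x :=
    ((hf.fderiv_right (m := 1) le_rfl).differentiable one_ne_zero).differentiableAt
  have hsymm : IsSymmSndFDerivAt ℝ f x :=
    hf.contDiffAt.isSymmSndFDerivAt (by simp [minSmoothness_of_isRCLikeNormedField])
  change fderiv ℝ (fun y => fderiv ℝ f y (Pi.single a 1)) x (Pi.single b 1)
    = fderiv ℝ (fun y => fderiv ℝ f y (Pi.single b 1)) x (Pi.single a 1)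
  rw [fderiv_clm_apply hdf (differentiableAt_const _),
    fderiv_clm_apply hdf (differentiableAt_const _)]
  simpa using hsymm _ _

end PartialDerivative

section MatrixInverse

variable {E : Type*} [NormedAddCommGroup E] [NormedSpace ℝ E]
  {κ : Type*} [Fintype κ] [DecidableEq κ] {M : E → Matrix κ κ ℝ} {x : E}

lemma differentiableAt_det (hM : ∀ i j, DifferentiableAt ℝ (fun z => M z i j) x) :
    DifferentiableAt ℝ (fun z => (M z).det) x := by
  simp only [Matrix.det_apply']
  exact .fun_sum fun σ _ => (differentiableAt_const _).mul
    (HasFDerivAt.finsetProd (g := fun i z => M z (σ i) i) fun i _ =>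
      (hM (σ i) i).hasFDerivAt).differentiableAt

lemma differentiableAt_inv_apply (hM : ∀ i j, DifferentiableAt ℝ (fun z => M z i j) x)
    (hdet : IsUnit (M x).det) (i j : κ) :
    DifferentiableAt ℝ (fun z => (M z)⁻¹ i j) x := by
  have hadj : DifferentiableAt ℝ (fun z => (M z).adjugate i j) x := by
    simp only [Matrix.adjugate_apply]
    refine differentiableAt_det fun a b => ?_
    by_cases ha : a = j
    · simp [Matrix.updateRow_apply, ha]
    · simpa [Matrix.updateRow_apply, ha] using hM a b
  simp only [Matrix.inv_def, Ring.inverse_eq_inv, Matrix.smul_apply, smul_eq_mul]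
  exact ((differentiableAt_det hM).inv hdet.ne_zero).mul hadj

end MatrixInverse

section InverseMetric

variable {ι : Type*} [Fintype ι] [DecidableEq ι] {κ : Type*} [Fintype κ] [DecidableEq κ]
  {g : (ι → ℝ) → Matrix κ κ ℝ} {x : ι → ℝ}

lemma pd_inv (hg : ∀ i j, DifferentiableAt ℝ (fun z => g z i j) x)
    (hdet : ∀ z, IsUnit (g z).det) (c : ι) :
    Matrix.of (fun i j => pd (fun z => (g z)⁻¹ i j) c x)
      = -((g x)⁻¹ * Matrix.of (fun a b => pd (fun z => g z a b) c x) * (g x)⁻¹) := by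
  set dH : Matrix κ κ ℝ := Matrix.of fun i j => pd (fun z => (g z)⁻¹ i j) c x
  set dG : Matrix κ κ ℝ := Matrix.of fun a b => pd (fun z => g z a b) c x
  have hH := differentiableAt_inv_apply hg (hdet x)
  have hprod : dH * g x + (g x)⁻¹ * dG = 0 := by
    ext i b
    have hconst : ∀ z, ∑ k, (g z)⁻¹ i k * g z k b = (1 : Matrix κ κ ℝ) i b := fun z => by
      rw [← Matrix.mul_apply, Matrix.nonsing_inv_mul _ (hdet z)]
    have h0 := pd_eq_zero_of_forall_eq hconst c x
    rw [pd_fun_sum fun k _ => (hH i k).fun_mul (hg k b)] at h0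
    simpa [dH, dG, Matrix.mul_apply, pd_fun_mul (hH i _) (hg _ b), Finset.sum_add_distrib] using h0
  calc dH = dH * g x * (g x)⁻¹ := by
        rw [Matrix.mul_assoc, Matrix.mul_nonsing_inv _ (hdet x), Matrix.mul_one]
    _ = -((g x)⁻¹ * dG * (g x)⁻¹) := by
        rw [eq_neg_of_add_eq_zero_left hprod, Matrix.neg_mul]

lemma pd_inv_apply (hg : ∀ i j, DifferentiableAt ℝ (fun z => g z i j) x)
    (hdet : ∀ z, IsUnit (g z).det) (c : ι) (i j : κ) :
    pd (fun z => (g z)⁻¹ i j) c x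
      = -∑ a, ∑ b, (g x)⁻¹ i a * pd (fun z => g z a b) c x * (g x)⁻¹ b j := by
  have := congrFun₂ (pd_inv hg hdet c) i j
  simp only [Matrix.of_apply, Matrix.neg_apply, Matrix.mul_apply, Finset.sum_mul] at this
  rw [this, Finset.sum_comm]

end InverseMetric

section Contraction

open Matrix

variable {ι : Type*} [Fintype ι] [DecidableEq ι]
  {g : (ι → ℝ) → Matrix ι ι ℝ} {p : ι → (ι → ℝ) → ℝ} {x : ι → ℝ}

noncomputable def raiseIndex (g : (ι → ℝ) → Matrix ι ι ℝ) (p : ι → (ι → ℝ) → ℝ)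
    (α : ι) (x : ι → ℝ) : ℝ :=
  ∑ ν, (g x)⁻¹ α ν * p ν x

noncomputable def covDeriv (g : (ι → ℝ) → Matrix ι ι ℝ) (V : ι → (ι → ℝ) → ℝ)
    (α β : ι) (x : ι → ℝ) : ℝ :=
  pd (V α) β x + ∑ γ, Chr g α β γ x * V γ x

lemma pd_raiseIndex (hg : ∀ i j, DifferentiableAt ℝ (fun z => g z i j) x)
    (hdet : ∀ z, IsUnit (g z).det) (hp : ∀ ν, DifferentiableAt ℝ (p ν) x) (α b : ι) :
    pd (raiseIndex g p α) b x = ∑ ρ, (g x)⁻¹ α ρ *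
      (pd (p ρ) b x - ∑ γ, pd (fun z => g z ρ γ) b x * raiseIndex g p γ x) := by
  have hH := differentiableAt_inv_apply hg (hdet x)
  change pd (fun z => ∑ ν, (g z)⁻¹ α ν * p ν z) b x = _
  rw [pd_fun_sum fun ν _ => (hH α ν).fun_mul (hp ν)]
  simp only [pd_fun_mul (hH α _) (hp _), pd_inv_apply hg hdet, raiseIndex, mul_sub, neg_mul,
    Finset.sum_add_distrib, Finset.mul_sum, Finset.sum_mul, Finset.sum_sub_distrib,
    Finset.sum_neg_distrib]
  rw [Finset.sum_comm]
  simp only [mul_assoc]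
  rw [add_comm, sub_eq_add_neg, Finset.sum_congr rfl fun _ _ => Finset.sum_comm]

lemma sum_chr_mul_mul (α : ι) (P : ι → ℝ) :
    ∑ b, (∑ γ, Chr g α b γ x * P γ) * P b = ∑ ρ, (g x)⁻¹ α ρ *
      ∑ b, ∑ γ, (pd (fun z => g z ρ γ) b x - 1 / 2 * pd (fun z => g z b γ) ρ x) * P γ * P b := by
  have hswap : ∀ ρ, ∑ b, ∑ γ, pd (fun z => g z ρ b) γ x * P γ * P b
      = ∑ b, ∑ γ, pd (fun z => g z ρ γ) b x * P γ * P b := fun ρ => by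
    rw [Finset.sum_comm]
    exact Finset.sum_congr rfl fun _ _ => Finset.sum_congr rfl fun _ _ => by ring
  calc ∑ b, (∑ γ, Chr g α b γ x * P γ) * P b
      = ∑ ρ, (g x)⁻¹ α ρ * (1 / 2 * ∑ b, ∑ γ, (pd (fun z => g z ρ γ) b x
          + pd (fun z => g z ρ b) γ x - pd (fun z => g z b γ) ρ x) * P γ * P b) := by
        simp only [Chr, Finset.mul_sum, Finset.sum_mul]
        rw [Finset.sum_congr rfl fun _ _ => Finset.sum_comm, Finset.sum_comm]
        exact Finset.sum_congr rfl fun _ _ => Finset.sum_congr rfl fun _ _ =>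
          Finset.sum_congr rfl fun _ _ => by ring
    _ = _ := by
        congr 1 with ρ
        simp only [add_mul, sub_mul, Finset.sum_add_distrib, Finset.sum_sub_distrib, hswap]
        simp only [mul_assoc, ← Finset.mul_sum]
        ring

lemma sum_covDeriv_raiseIndex_mul (hg : ∀ i j, DifferentiableAt ℝ (fun z => g z i j) x)
    (hdet : ∀ z, IsUnit (g z).det) (hp : ∀ ν, DifferentiableAt ℝ (p ν) x) (α : ι) :
    ∑ b, covDeriv g (raiseIndex g p) α b x * raiseIndex g p b x
      = ∑ ρ, (g x)⁻¹ α ρ * (∑ b, pd (p ρ) b x * raiseIndex g p b x - 1 / 2 *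
          ∑ b, ∑ γ, pd (fun z => g z b γ) ρ x * raiseIndex g p γ x * raiseIndex g p b x) := by
  simp only [covDeriv, add_mul, Finset.sum_add_distrib, sum_chr_mul_mul]
  simp only [pd_raiseIndex hg hdet hp, Finset.sum_mul]
  rw [Finset.sum_comm, ← Finset.sum_add_distrib]
  refine Finset.sum_congr rfl fun ρ _ => ?_
  simp only [mul_sub, sub_mul, Finset.sum_sub_distrib, Finset.mul_sum, Finset.sum_mul]
  ring_nf

lemma sum_pd_mul_raiseIndex_of_mass_shell (hg : ∀ i j, DifferentiableAt ℝ (fun z => g z i j) x)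
    (hdet : ∀ z, IsUnit (g z).det) (hsymm : (g x).IsSymm) (hp : ∀ ν, DifferentiableAt ℝ (p ν) x)
    {c : ℝ} (hmass : ∀ z, ∑ μ, ∑ ν, (g z)⁻¹ μ ν * p μ z * p ν z = c) (ρ : ι) :
    ∑ b, pd (p b) ρ x * raiseIndex g p b x = 1 / 2 *
      ∑ b, ∑ γ, pd (fun z => g z b γ) ρ x * raiseIndex g p γ x * raiseIndex g p b x := by
  have hH := differentiableAt_inv_apply hg (hdet x)
  set H := (g x)⁻¹
  set v : ι → ℝ := fun ν => p ν x
  set dv : ι → ℝ := fun ν => pd (p ν) ρ x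
  set dG : Matrix ι ι ℝ := Matrix.of fun a b => pd (fun z => g z a b) ρ x
  set dH : Matrix ι ι ℝ := Matrix.of fun a b => pd (fun z => (g z)⁻¹ a b) ρ x
  have hd : ∀ μ ν, DifferentiableAt ℝ (fun z => (g z)⁻¹ μ ν * p μ z * p ν z) x :=
    fun μ ν => ((hH μ ν).fun_mul (hp μ)).fun_mul (hp ν)
  have hterm : ∀ μ ν, pd (fun z => (g z)⁻¹ μ ν * p μ z * p ν z) ρ x
      = v μ * (dH μ ν * v ν) + dv μ * (H μ ν * v ν) + v μ * (H μ ν * dv ν) := fun μ ν => by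
    rw [pd_fun_mul ((hH μ ν).fun_mul (hp μ)) (hp ν), pd_fun_mul (hH μ ν) (hp μ)]
    simp only [dH, v, dv, H, Matrix.of_apply]
    ring
  have hderiv : v ⬝ᵥ (dH *ᵥ v) + dv ⬝ᵥ (H *ᵥ v) + v ⬝ᵥ (H *ᵥ dv) = 0 := by
    have h0 := pd_eq_zero_of_forall_eq hmass ρ x
    rw [pd_fun_sum fun μ _ => .fun_sum fun ν _ => hd μ ν] at h0
    rw [← h0, Finset.sum_congr rfl fun μ _ => pd_fun_sum (fun ν _ => hd μ ν) ρ]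
    simp only [hterm, dotProduct, mulVec, Finset.mul_sum, Finset.sum_add_distrib]
  have hvH : v ᵥ* H = H *ᵥ v := by rw [← mulVec_transpose, hsymm.inv.eq]
  set P := H *ᵥ v
  have hdH : dH = -(H * dG * H) := pd_inv hg hdet ρ
  rw [hdH, neg_mulVec, dotProduct_neg, ← mulVec_mulVec, ← mulVec_mulVec, dotProduct_mulVec v H,
    dotProduct_mulVec v H, hvH, dotProduct_comm P dv] at hderiv
  change ∑ b, dv b * P b = 1 / 2 * ∑ b, ∑ γ, dG b γ * P γ * P b
  simp only [← Finset.sum_mul]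
  change dv ⬝ᵥ P = 1 / 2 * (dG *ᵥ P ⬝ᵥ P)
  rw [dotProduct_comm (dG *ᵥ P)]
  linarith

end Contraction

section KinematicalMomentum

variable {S : (Fin 4 → ℝ) → ℝ} {A : (Fin 4 → ℝ) → Fin 4 → ℝ} {x : Fin 4 → ℝ}

lemma pUp_eq_raiseIndex (g : (Fin 4 → ℝ) → Matrix (Fin 4) (Fin 4) ℝ) (q : ℝ) :
    pUp g S A q = raiseIndex g (pDown S A q) :=
  rfl

lemma differentiableAt_pDown (hS : ContDiff ℝ 2 S)
    (hA : ∀ μ, DifferentiableAt ℝ (fun z => A z μ) x) (q : ℝ) (ν : Fin 4) :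
    DifferentiableAt ℝ (pDown S A q ν) x :=
  ((hS.pd (n := 1) ν).differentiable one_ne_zero x).sub ((hA ν).const_mul q)

lemma pd_pDown_sub_pd_pDown (hS : ContDiff ℝ 2 S)
    (hA : ∀ μ, DifferentiableAt ℝ (fun z => A z μ) x) (q : ℝ) (γ b : Fin 4) :
    pd (pDown S A q γ) b x - pd (pDown S A q b) γ x = q * Fem A γ b x := by
  have hpd : ∀ μ ν, pd (pDown S A q μ) ν x = pd (pd S μ) ν x - q * pd (fun z => A z μ) ν x :=
    fun μ ν => by
      rw [show pDown S A q μ = fun z => pd S μ z - q * A z μ from rfl,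
        pd_fun_sub ((hS.pd (n := 1) μ).differentiable one_ne_zero x) ((hA μ).const_mul q),
        pd_const_mul (hA μ)]
  rw [hpd, hpd, Fem, pd_comm hS γ b]
  ring

end KinematicalMomentum

/-- if g^{μν} p_μ p_ν = ε m² identically, then
p^α_{;β} p^β = q g^{αγ} F_{γβ} p^β. -/
theorem momentum_lorentz_force_identity
    (g : (Fin 4 → ℝ) → Matrix (Fin 4) (Fin 4) ℝ)
    (S : (Fin 4 → ℝ) → ℝ) (A : (Fin 4 → ℝ) → Fin 4 → ℝ) (q : ℝ)
    (hg : ∀ μ ν, ContDiff ℝ (⊤ : ℕ∞) (fun x => g x μ ν))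
    (hgsymm : ∀ x, (g x).IsSymm)
    (hginv : ∀ x, IsUnit (g x).det)
    (hS : ContDiff ℝ (⊤ : ℕ∞) S)
    (hA : ∀ μ, ContDiff ℝ (⊤ : ℕ∞) (fun x => A x μ))
    (ε m : ℝ)
    (hmass : ∀ x : Fin 4 → ℝ,
      ∑ μ : Fin 4, ∑ ν : Fin 4, (g x)⁻¹ μ ν * pDown S A q μ x * pDown S A q ν x = ε * m^2) :
    ∀ (x : Fin 4 → ℝ) (α : Fin 4),
      ∑ b : Fin 4, (pd (fun z => pUp g S A q α z) b x
          + ∑ γ : Fin 4, Chr g α b γ x * pUp g S A q γ x) * pUp g S A q b x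
      = q * ∑ γ : Fin 4, (g x)⁻¹ α γ * ∑ b : Fin 4, Fem A γ b x * pUp g S A q b x := by
  intro x α
  have hS2 : ContDiff ℝ 2 S := hS.of_le (WithTop.coe_le_coe.mpr le_top)
  have hgx : ∀ i j, DifferentiableAt ℝ (fun z => g z i j) x :=
    fun i j => (hg i j).differentiable (by simp) x
  have hAx : ∀ μ, DifferentiableAt ℝ (fun z => A z μ) x :=
    fun μ => (hA μ).differentiable (by simp) x
  have hp := differentiableAt_pDown hS2 hAx q
  show ∑ b, covDeriv g (pUp g S A q) α b x * pUp g S A q b x = _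
  rw [pUp_eq_raiseIndex, sum_covDeriv_raiseIndex_mul hgx hginv hp]
  simp only [← sum_pd_mul_raiseIndex_of_mass_shell hgx hginv (hgsymm x) hp hmass,
    ← Finset.sum_sub_distrib, ← sub_mul, pd_pDown_sub_pd_pDown hS2 hAx, Finset.mul_sum]
  exact Finset.sum_congr rfl fun _ _ => Finset.sum_congr rfl fun _ _ => by ring
end
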